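/- arXiv:2110.12476 — 2 statements merged into one kernel-verified Lean document; each statement's English description precedes it below -/
import Mathlib

section
/- Let α ∈ [0,1] be a real number and let K_{n_1, n_2, …, n_p} be the complete p-partite graph with parts of sizes n_1, …, n_p and N = n_1 + ⋯ + n_p vertices. Then for each i with n_i ≥ 2, the number α(N − n_i) is an eigenvalue of A_α(K_{n_1, …, n_p}) whose eigenspace has dimension at least n_i − 1. -/
open Matrix Polynomial BigOperators

/-- The generalized adjacency matrix `A_α(G) = α·D(G) + (1−α)·A(G)`. -/
noncomputable def Aalpha {V : Type*} [Fintype V] (G : SimpleGraph V) (α : ℝ) :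
    Matrix V V ℝ :=
  letI := Classical.decEq V
  letI := Classical.decRel G.Adj
  α • Matrix.diagonal (fun v => (G.degree v : ℝ)) + (1 - α) • G.adjMatrix ℝ

/-- `μ` is an eigenvalue of the real matrix `M`. -/
def Matrix.IsEigenvalue {n : Type*} [Fintype n] (M : Matrix n n ℝ) (μ : ℝ) : Prop :=
  ∃ v : n → ℝ, v ≠ 0 ∧ M.mulVec v = μ • v

/-- The dimension of the eigenspace of a real matrix `M` for the value `μ`. -/
noncomputable def eigMult {n : Type*} [Fintype n] (M : Matrix n n ℝ) (μ : ℝ) : ℕ :=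
  letI := Classical.decEq n
  Module.finrank ℝ (Module.End.eigenspace (Matrix.toLin' M) μ)

/-- The joined union `G[G_1, …, G_n]`. -/
def joinedUnion {n : ℕ} (G : SimpleGraph (Fin n)) (V : Fin n → Type*)
    (Gs : ∀ i, SimpleGraph (V i)) : SimpleGraph (Σ i, V i) :=
  SimpleGraph.fromRel (fun x y =>
    if h : x.1 = y.1 then (Gs y.1).Adj (h ▸ x.2) y.2 else G.Adj x.1 y.1)

/-- The join `G ∇ H` of two graphs. -/
def graphJoin {V W : Type*} (G : SimpleGraph V) (H : SimpleGraph W) :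
    SimpleGraph (V ⊕ W) :=
  SimpleGraph.fromRel (fun x y =>
    match x, y with
    | Sum.inl a, Sum.inl b => G.Adj a b
    | Sum.inr a, Sum.inr b => H.Adj a b
    | _, _ => True)

/-- The disjoint union `G ∪ H` of two graphs. -/
def disjUnion {V W : Type*} (G : SimpleGraph V) (H : SimpleGraph W) :
    SimpleGraph (V ⊕ W) :=
  SimpleGraph.fromRel (fun x y =>
    match x, y with
    | Sum.inl a, Sum.inl b => G.Adj a b
    | Sum.inr a, Sum.inr b => H.Adj a b
    | _, _ => False)

/-- Degree of a vertex (classical version). -/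
noncomputable def gdegree {V : Type*} [Fintype V] (G : SimpleGraph V) (v : V) : ℕ :=
  letI := Classical.decEq V
  letI := Classical.decRel G.Adj
  G.degree v

/-- The power graph of a group. -/
def powerGraph (G : Type*) [Group G] : SimpleGraph G :=
  SimpleGraph.fromRel (fun x y => ∃ k : ℕ, 0 < k ∧ y = x ^ k)

/-!
Two vertices in the same part of a complete multipartite graph are twins: they have the same
neighbourhood, hence the same degree `N - n_i`. For twins `x, y` the adjacency matrix kills
`e_x - e_y` and the degree matrix scales it by the common degree, so `e_x - e_y` is an eigenvector
of `A_α` for `α · deg y`. Fixing `y` in part `i`, the `n_i - 1` vectors `e_x - e_y`, `x ≠ y` in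
part `i`, are linearly independent.
-/

theorem Pi.linearIndependent_single_one_sub_single_one {R ι V : Type*} [Ring R] [DecidableEq V]
    {f : ι → V} (hf : Function.Injective f) {y : V} (hy : ∀ k, f k ≠ y) :
    LinearIndependent R (fun k => (Pi.single (f k) 1 - Pi.single y 1 : V → R)) := by
  -- forgetting the coordinate `y` turns the family into part of the standard basis
  apply LinearIndependent.of_comp (LinearMap.funLeft R R (Subtype.val : {x // x ≠ y} → V))
  have hrestrict : LinearMap.funLeft R R Subtype.val ∘
      (fun k => (Pi.single (f k) 1 - Pi.single y 1 : V → R)) =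
      fun k => Pi.single (⟨f k, hy k⟩ : {x // x ≠ y}) 1 := by
    ext k x
    simp [LinearMap.funLeft_apply, Pi.single_apply, x.2, Subtype.ext_iff]
  rw [hrestrict]
  exact (Pi.linearIndependent_single_one _ R).comp _ fun a b hab => hf (congrArg Subtype.val hab)

theorem Matrix.card_le_eigMult {n ι : Type*} [Fintype n] [Fintype ι] {M : Matrix n n ℝ} {μ : ℝ}
    {v : ι → n → ℝ} (hv : LinearIndependent ℝ v) (hMv : ∀ k, M *ᵥ v k = μ • v k) :
    Fintype.card ι ≤ eigMult M μ := by
  classical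
  have hmem : ∀ k, v k ∈ Module.End.eigenspace (toLin' M) μ := fun k => by
    rw [Module.End.mem_eigenspace_iff, toLin'_apply, hMv]
  exact (LinearIndependent.of_comp (Submodule.subtype _) (v := fun k => ⟨v k, hmem k⟩) hv)
    |>.fintype_card_le_finrank

namespace SimpleGraph

variable {V : Type*} [Fintype V] (G : SimpleGraph V)

theorem Aalpha_eq [DecidableEq V] [DecidableRel G.Adj] (α : ℝ) :
    Aalpha G α = α • diagonal (fun v => (G.degree v : ℝ)) + (1 - α) • G.adjMatrix ℝ := by
  unfold Aalpha
  congr!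

theorem degree_eq_of_neighborSet_eq [DecidableRel G.Adj] {x y : V}
    (h : G.neighborSet x = G.neighborSet y) : G.degree x = G.degree y := by
  simp only [← card_neighborSet_eq_degree, h]

theorem Aalpha_mulVec_single_sub_single [DecidableEq V] [DecidableRel G.Adj] {x y : V}
    (h : G.neighborSet x = G.neighborSet y) (α : ℝ) :
    Aalpha G α *ᵥ (Pi.single x 1 - Pi.single y 1) =
      (α * G.degree x) • (Pi.single x 1 - Pi.single y 1) := by
  have hadj : G.adjMatrix ℝ *ᵥ (Pi.single x 1 - Pi.single y 1) = 0 := by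
    ext u
    have hxy : G.Adj x u ↔ G.Adj y u := Set.ext_iff.mp h u
    simp [adj_comm, hxy]
  rw [Aalpha_eq, add_mulVec, smul_mulVec, smul_mulVec, hadj, smul_zero, add_zero, mulVec_sub,
    diagonal_mulVec_single, diagonal_mulVec_single, degree_eq_of_neighborSet_eq G h]
  ext u
  simp only [Pi.single_apply, Pi.sub_apply, Pi.smul_apply, smul_eq_mul]
  split_ifs <;> ring

theorem card_le_eigMult_Aalpha [DecidableRel G.Adj] {ι : Type*} [Fintype ι] {f : ι → V}
    (hf : Function.Injective f) {y : V} (hy : ∀ k, f k ≠ y)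
    (htwin : ∀ k, G.neighborSet (f k) = G.neighborSet y) (α : ℝ) :
    Fintype.card ι ≤ eigMult (Aalpha G α) (α * G.degree y) := by
  classical
  refine Matrix.card_le_eigMult (Pi.linearIndependent_single_one_sub_single_one hf hy) fun k => ?_
  rw [Aalpha_mulVec_single_sub_single G (htwin k), degree_eq_of_neighborSet_eq G (htwin k)]

theorem neighborSet_completeMultipartiteGraph_mk {ι : Type*} {W : ι → Type*} (i : ι) (a b : W i) :
    (completeMultipartiteGraph W).neighborSet ⟨i, a⟩ =
      (completeMultipartiteGraph W).neighborSet ⟨i, b⟩ := by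
  ext
  simp

theorem degree_completeMultipartiteGraph_add_card {ι : Type*} [Fintype ι] [DecidableEq ι]
    {W : ι → Type*} [∀ i, Fintype (W i)] [DecidableRel (completeMultipartiteGraph W).Adj]
    (v : Σ i, W i) :
    (completeMultipartiteGraph W).degree v + Fintype.card (W v.1) = Fintype.card (Σ i, W i) := by
  have hnbr : (completeMultipartiteGraph W).neighborSet v ≃ {w : Σ i, W i // ¬w.1 = v.1} :=
    Equiv.subtypeEquivRight fun w => by simp [eq_comm]
  rw [← card_neighborSet_eq_degree, Fintype.card_congr hnbr, Fintype.card_subtype_compl,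
    ← Fintype.card_congr (Equiv.sigmaSubtype v.1), Nat.sub_add_cancel (Fintype.card_subtype_le _)]

end SimpleGraph

theorem stmt_3_general {α : ℝ}
    {p : ℕ} (n : Fin p → ℕ) (i : Fin p) :
    n i - 1 ≤
      eigMult (Aalpha (SimpleGraph.completeMultipartiteGraph (fun j => Fin (n j))) α)
        (α * ((∑ j, (n j : ℝ)) - (n i : ℝ))) := by
  classical
  obtain hzero | hpos := Nat.eq_zero_or_pos (n i)
  · simp [hzero]
  set G := SimpleGraph.completeMultipartiteGraph fun j => Fin (n j)
  let y : Σ j, Fin (n j) := ⟨i, ⟨0, hpos⟩⟩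
  have hdeg : (G.degree y : ℝ) = ∑ j, (n j : ℝ) - n i := by
    have := SimpleGraph.degree_completeMultipartiteGraph_add_card y
    simp only [Fintype.card_fin, Fintype.card_sigma] at this
    rw [eq_sub_iff_add_eq]
    exact_mod_cast this
  have hbound := G.card_le_eigMult_Aalpha (y := y)
    (f := fun a : {a : Fin (n i) // a ≠ y.2} => ⟨i, a.1⟩)
    (fun a b hab => Subtype.ext (by simpa using hab)) (fun a hay => a.2 (by simpa [y] using hay))
    (fun a => SimpleGraph.neighborSet_completeMultipartiteGraph_mk i a.1 y.2) α
  simpa [hdeg, Fintype.card_subtype_compl] using hbound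

/-- eigenvalues of the complete multipartite graph. -/
theorem stmt_3 {α : ℝ} (hα : α ∈ Set.Icc (0 : ℝ) 1)
    {p : ℕ} (n : Fin p → ℕ) (i : Fin p) (hni : 2 ≤ n i) :
    n i - 1 ≤
      eigMult (Aalpha (SimpleGraph.completeMultipartiteGraph (fun j => Fin (n j))) α)
        (α * ((∑ j, (n j : ℝ)) - (n i : ℝ))) :=
  stmt_3_general n i
end

section
/- Let α ∈ [0,1] be a real number and let 𝒢 be a non-abelian group of order pq, where p < q are primes. Then for the power graph P(𝒢): (i) αp − 1 is an eigenvalue of A_α(P(𝒢)) whose eigenspace has dimension at least q(p−2); (ii) αq − 1 is an eigenvalue whose eigenspace has dimension at least q − 2; (iii) α + p − 2 is an eigenvalue whose eigenspace has dimension at least q − 1. -/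
open Matrix Polynomial BigOperators

/-!
Every non-identity element of a non-abelian group of order `pq` has prime order (an element of
order `pq` would make the group cyclic). Hence two non-identity elements are adjacent in the power
graph iff they generate the same subgroup, and the power graph is `K₁` joined with a disjoint
union of cliques, one on the generators of each cyclic subgroup of prime order. Since `pq < q²`,
two subgroups of order `q` would meet trivially and cannot coexist, so there is one clique of
size `q - 1`; counting the remaining `pq - q` elements gives `q` cliques of size `p - 1`.

Two vertices `x, y` of one clique are closed twins, so `e_x - e_y` is an eigenvector of `A_α` for
`α (deg x + 1) - 1`. For two cliques `C, C'` of size `p - 1`, every other vertex sees equally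
many vertices of each, so `𝟙_C - 𝟙_{C'}` is an eigenvector for
`α (p - 1) + (1 - α) (p - 2)`.
Choosing one representative per clique makes these families linearly independent.
-/

open Finset

section IndicatorSub

variable {V : Type*} [DecidableEq V]

def indicatorSub (C C' : Finset V) (w : V) : ℝ :=
  (if w ∈ C then 1 else 0) - if w ∈ C' then 1 else 0

theorem linearIndependent_indicatorSub {ι : Type*} (C C' : ι → Finset V) (x : ι → V)
    (hx : ∀ i, x i ∈ C i) (hxC : ∀ i j, j ≠ i → x i ∉ C j)
    (hxC' : ∀ i j, x i ∉ C' j) :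
    LinearIndependent ℝ fun i => indicatorSub (C i) (C' i) := by
  rw [linearIndependent_iff']
  intro s g hsum i hi
  have h := congrFun hsum (x i)
  simp only [Finset.sum_apply, Pi.smul_apply, smul_eq_mul, Pi.zero_apply] at h
  rw [Finset.sum_eq_single i (fun j _ hji => by simp [indicatorSub, hxC i j hji, hxC' i j])
    (fun hi' => absurd hi hi')] at h
  simpa [indicatorSub, hx i, hxC' i i] using h

end IndicatorSub

section GeneralizedAdjacency

variable {V : Type*} [Fintype V]

theorem card_le_eigMult_of_linearIndependent (M : Matrix V V ℝ) (μ : ℝ) {ι : Type*}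
    [Fintype ι] {f : ι → V → ℝ} (hf : LinearIndependent ℝ f)
    (hM : ∀ i, M *ᵥ f i = μ • f i) :
    Fintype.card ι ≤ eigMult M μ := by
  let := Classical.decEq V
  have hmem : ∀ i, f i ∈ Module.End.eigenspace (Matrix.toLin' M) μ := fun i => by
    rw [Module.End.mem_eigenspace_iff, Matrix.toLin'_apply, hM]
  exact (LinearIndependent.of_comp (Submodule.subtype _) (v := fun i => ⟨f i, hmem i⟩)
    hf).fintype_card_le_finrank

variable [DecidableEq V] (G : SimpleGraph V) [DecidableRel G.Adj] (α : ℝ)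

theorem Aalpha_eq :
    Aalpha G α =
      α • Matrix.diagonal (fun v => (G.degree v : ℝ)) + (1 - α) • G.adjMatrix ℝ := by
  unfold Aalpha
  congr!

theorem Aalpha_mulVec_indicatorSub {C C' : Finset V} {d a b : ℕ} (hCC' : Disjoint C C')
    (hC : ∀ z ∈ C, G.degree z = d ∧ #(G.neighborFinset z ∩ C) = a ∧
      #(G.neighborFinset z ∩ C') = b)
    (hC' : ∀ z ∈ C', G.degree z = d ∧ #(G.neighborFinset z ∩ C') = a ∧
      #(G.neighborFinset z ∩ C) = b)
    (hout : ∀ z ∉ C, z ∉ C' → #(G.neighborFinset z ∩ C) = #(G.neighborFinset z ∩ C')) :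
    Aalpha G α *ᵥ indicatorSub C C' = (α * d + (1 - α) * (a - b)) • indicatorSub C C' := by
  have hsum : ∀ z (S : Finset V),
      ∑ u ∈ G.neighborFinset z, (if u ∈ S then (1 : ℝ) else 0) =
        #(G.neighborFinset z ∩ S) := by
    intro z S
    rw [Finset.sum_ite_mem, Finset.sum_const, nsmul_eq_mul, mul_one]
  ext z
  simp only [Aalpha_eq, Matrix.add_mulVec, Matrix.smul_mulVec, Pi.add_apply, Pi.smul_apply,
    Matrix.mulVec_diagonal, SimpleGraph.adjMatrix_mulVec_apply, indicatorSub,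
    Finset.sum_sub_distrib, hsum, smul_eq_mul]
  by_cases hzC : z ∈ C
  · obtain ⟨hd, ha, hb⟩ := hC z hzC
    simp only [hzC, disjoint_left.mp hCC' hzC, if_true, if_false, hd, ha, hb]
    ring
  by_cases hzC' : z ∈ C'
  · obtain ⟨hd, ha, hb⟩ := hC' z hzC'
    simp only [hzC, hzC', if_true, if_false, hd, ha, hb]
    ring
  · simp only [hzC, hzC', if_false, hout z hzC hzC']
    ring

theorem degree_eq_of_closedTwins {x y : V} (hxy : G.Adj x y)
    (htwin : ∀ z, z ≠ x → z ≠ y → (G.Adj x z ↔ G.Adj y z)) :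
    G.degree y = G.degree x := by
  have hN : G.neighborFinset y = insert x ((G.neighborFinset x).erase y) := by
    ext z
    simp only [SimpleGraph.mem_neighborFinset, mem_insert, mem_erase]
    by_cases hzx : z = x
    · simp [hzx, hxy.symm]
    by_cases hzy : z = y
    · simp [hzy, hxy.ne']
    simp [hzx, hzy, htwin z hzx hzy]
  rw [← SimpleGraph.card_neighborFinset_eq_degree, ← SimpleGraph.card_neighborFinset_eq_degree,
    hN, card_insert_of_notMem (by simp), card_erase_of_mem (by simpa using hxy)]
  have : 0 < #(G.neighborFinset x) := card_pos.mpr ⟨y, by simpa using hxy⟩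
  omega

theorem Aalpha_mulVec_indicatorSub_of_closedTwins {x y : V} (hxy : G.Adj x y)
    (htwin : ∀ z, z ≠ x → z ≠ y → (G.Adj x z ↔ G.Adj y z)) :
    Aalpha G α *ᵥ indicatorSub {x} {y} =
      (α * (G.degree x + 1) - 1) • indicatorSub {x} {y} := by
  have hsingle : ∀ z w, #(G.neighborFinset z ∩ {w}) = if G.Adj z w then 1 else 0 := by
    intro z w
    split_ifs with h
    · rw [inter_singleton_of_mem (by simpa using h), card_singleton]
    · rw [inter_singleton_of_notMem (by simpa using h), card_empty]
  rw [Aalpha_mulVec_indicatorSub G α (d := G.degree x) (a := 0) (b := 1)]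
  · congr 1
    push_cast
    ring
  · simpa using hxy.ne
  · simp [hsingle, hxy]
  · simp [hsingle, hxy.symm, degree_eq_of_closedTwins G hxy htwin]
  · intro z hzx hzy
    rw [mem_singleton] at hzx hzy
    simp only [hsingle, G.adj_comm z, htwin z hzx hzy]

end GeneralizedAdjacency

open Subgroup

section PowerGraph

open scoped Classical

variable {G : Type*} [Group G]

theorem powerGraph_adj_iff [Finite G] {x y : G} :
    (powerGraph G).Adj x y ↔ x ≠ y ∧ (y ∈ zpowers x ∨ x ∈ zpowers y) := by
  have hpow : ∀ a b : G, (∃ k : ℕ, 0 < k ∧ b = a ^ k) ↔ b ∈ zpowers a := by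
    refine fun a b => ⟨fun ⟨k, _, hk⟩ => hk ▸ npow_mem_zpowers a k, fun hb => ?_⟩
    obtain ⟨k, hk⟩ := mem_powers_iff_mem_zpowers.mpr hb
    rcases Nat.eq_zero_or_pos k with rfl | hk0
    · exact ⟨orderOf a, orderOf_pos a, by rw [pow_orderOf_eq_one]; simpa using hk.symm⟩
    · exact ⟨k, hk0, hk.symm⟩
  exact (SimpleGraph.fromRel_adj _ x y).trans (by rw [hpow, hpow])

theorem powerGraph_adj_one [Finite G] {x : G} (hx : x ≠ 1) : (powerGraph G).Adj 1 x :=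
  powerGraph_adj_iff.mpr ⟨hx.symm, Or.inr (one_mem _)⟩

theorem powerGraph_adj_of_zpowers_eq [Finite G] {x y : G} (hne : x ≠ y)
    (h : zpowers x = zpowers y) : (powerGraph G).Adj x y :=
  powerGraph_adj_iff.mpr ⟨hne, Or.inr (h ▸ mem_zpowers x)⟩

theorem powerGraph_adj_iff_of_zpowers_eq [Finite G] {x y z : G} (h : zpowers x = zpowers y)
    (hzx : z ≠ x) (hzy : z ≠ y) : (powerGraph G).Adj x z ↔ (powerGraph G).Adj y z := by
  simp only [powerGraph_adj_iff, ← zpowers_le, h, Ne.symm hzx, Ne.symm hzy, ne_eq,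
    not_false_eq_true, true_and]

theorem zpowers_eq_of_mem_zpowers [Finite G] {x y : G} (hy : (orderOf y).Prime) (hx : x ≠ 1)
    (hxy : x ∈ zpowers y) : zpowers x = zpowers y := by
  have hord : orderOf x = orderOf y :=
    (hy.eq_one_or_self_of_dvd _ (orderOf_dvd_of_mem_zpowers hxy)).resolve_left
      (by rwa [orderOf_eq_one_iff])
  exact eq_of_le_of_card_ge (zpowers_le.mpr hxy) (by rw [Nat.card_zpowers, Nat.card_zpowers, hord])

theorem orderOf_eq_of_zpowers_eq {x y : G} (h : zpowers x = zpowers y) : orderOf x = orderOf y := by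
  rw [← Nat.card_zpowers, h, Nat.card_zpowers]

section Generators

variable [Fintype G]

noncomputable def generatorsOf (H : Subgroup G) : Finset G := {x | zpowers x = H}

@[simp]
theorem mem_generatorsOf {H : Subgroup G} {x : G} : x ∈ generatorsOf H ↔ zpowers x = H := by
  simp [generatorsOf]

theorem generatorsOf_zpowers_of_prime {x : G} (hx : (orderOf x).Prime) :
    generatorsOf (zpowers x) = (zpowers x : Set G).toFinset.erase 1 := by
  ext z
  simp only [mem_generatorsOf, Finset.mem_erase, Set.mem_toFinset, SetLike.mem_coe]
  refine ⟨fun h => ⟨?_, h ▸ mem_zpowers z⟩,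
    fun ⟨hz, hzx⟩ => zpowers_eq_of_mem_zpowers hx hz hzx⟩
  rintro rfl
  rw [zpowers_one_eq_bot, eq_comm, zpowers_eq_bot] at h
  exact hx.ne_one (h ▸ orderOf_one)

theorem card_generatorsOf_zpowers_of_prime {x : G} (hx : (orderOf x).Prime) :
    #(generatorsOf (zpowers x)) = orderOf x - 1 := by
  rw [generatorsOf_zpowers_of_prime hx, Finset.card_erase_of_mem (by simp),
    ← Nat.card_eq_card_toFinset, SetLike.coe_sort_coe, Nat.card_zpowers]

variable (G) in
noncomputable def cyclicSubgroupsOfOrder (n : ℕ) : Finset (Subgroup G) :=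
  ({x | orderOf x = n} : Finset G).image zpowers

theorem mem_cyclicSubgroupsOfOrder {n : ℕ} {H : Subgroup G} :
    H ∈ cyclicSubgroupsOfOrder G n ↔ ∃ x, orderOf x = n ∧ zpowers x = H := by
  simp [cyclicSubgroupsOfOrder]

theorem card_filter_orderOf_eq_of_prime {n : ℕ} (hn : n.Prime) :
    #({x | orderOf x = n} : Finset G) = (n - 1) * #(cyclicSubgroupsOfOrder G n) := by
  rw [Finset.card_eq_sum_card_image zpowers, ← cyclicSubgroupsOfOrder, mul_comm,
    ← smul_eq_mul, ← Finset.sum_const]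
  refine Finset.sum_congr rfl fun H hH => ?_
  obtain ⟨x, hx, rfl⟩ := mem_cyclicSubgroupsOfOrder.mp hH
  rw [Finset.filter_filter, ← hx, ← card_generatorsOf_zpowers_of_prime (hx ▸ hn)]
  congr 1
  ext z
  simp only [Finset.mem_filter, Finset.mem_univ, true_and, mem_generatorsOf, and_iff_right_iff_imp]
  exact orderOf_eq_of_zpowers_eq

end Generators

noncomputable def cyclicGenerator (H : Subgroup G) : G := Function.invFun zpowers H

theorem zpowers_cyclicGenerator (x : G) : zpowers (cyclicGenerator (zpowers x)) = zpowers x :=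
  Function.invFun_eq ⟨x, rfl⟩

theorem cyclicGenerator_zpowers_cyclicGenerator (x : G) :
    cyclicGenerator (zpowers (cyclicGenerator (zpowers x))) = cyclicGenerator (zpowers x) := by
  rw [zpowers_cyclicGenerator]

theorem card_filter_cyclicGenerator_ne_add [Fintype G] (n : ℕ) :
    #({x | orderOf x = n ∧ cyclicGenerator (zpowers x) ≠ x} : Finset G) +
      #(cyclicSubgroupsOfOrder G n) = #({x | orderOf x = n} : Finset G) := by
  have hfix : #({x | orderOf x = n ∧ cyclicGenerator (zpowers x) = x} : Finset G) =
      #(cyclicSubgroupsOfOrder G n) := by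
    refine Finset.card_bij (fun x _ => zpowers x) (fun x hx => ?_) (fun x hx y hy hxy => ?_)
      (fun H hH => ?_)
    · simp only [Finset.mem_filter, Finset.mem_univ, true_and] at hx
      exact mem_cyclicSubgroupsOfOrder.mpr ⟨x, hx.1, rfl⟩
    · simp only [Finset.mem_filter, Finset.mem_univ, true_and] at hx hy
      rw [← hx.2, ← hy.2, hxy]
    · obtain ⟨x, hx, rfl⟩ := mem_cyclicSubgroupsOfOrder.mp hH
      refine ⟨cyclicGenerator (zpowers x), ?_, zpowers_cyclicGenerator x⟩
      simp only [Finset.mem_filter, Finset.mem_univ, true_and]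
      exact ⟨(orderOf_eq_of_zpowers_eq (zpowers_cyclicGenerator x)).trans hx,
        cyclicGenerator_zpowers_cyclicGenerator x⟩
  rw [← hfix, add_comm, ← Finset.filter_filter, ← Finset.filter_filter]
  exact Finset.card_filter_add_card_filter_not _

end PowerGraph

section PrimeOrderElements

open scoped Classical

variable {G : Type*} [Group G] [Fintype G]

theorem powerGraph_adj_iff_of_prime (hG : ∀ x : G, x ≠ 1 → (orderOf x).Prime) {x y : G}
    (hx : x ≠ 1) : (powerGraph G).Adj x y ↔ y ≠ x ∧ y ∈ zpowers x := by
  rw [powerGraph_adj_iff]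
  refine ⟨fun ⟨hne, hmem⟩ => ⟨hne.symm, hmem.elim id fun h => ?_⟩,
    fun ⟨hne, h⟩ => ⟨hne.symm, Or.inl h⟩⟩
  have hy : y ≠ 1 := by
    rintro rfl
    exact hx (by simpa using h)
  exact zpowers_eq_of_mem_zpowers (hG y hy) hx h ▸ mem_zpowers y

theorem degree_powerGraph_of_prime (hG : ∀ x : G, x ≠ 1 → (orderOf x).Prime) {x : G}
    (hx : x ≠ 1) : (powerGraph G).degree x = orderOf x - 1 := by
  have hN : (powerGraph G).neighborFinset x = (zpowers x : Set G).toFinset.erase x := by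
    ext y
    simp [powerGraph_adj_iff_of_prime hG hx]
  rw [← SimpleGraph.card_neighborFinset_eq_degree, hN, Finset.card_erase_of_mem (by simp),
    ← Nat.card_eq_card_toFinset, SetLike.coe_sort_coe, Nat.card_zpowers]

theorem neighborFinset_powerGraph_inter_of_prime (hG : ∀ x : G, x ≠ 1 → (orderOf x).Prime)
    {z : G} (hz : z ≠ 1) {H : Subgroup G} (hH : H ≠ ⊥) :
    (powerGraph G).neighborFinset z ∩ generatorsOf H =
      if zpowers z = H then (generatorsOf H).erase z else ∅ := by
  ext u
  simp only [Finset.mem_inter, SimpleGraph.mem_neighborFinset, powerGraph_adj_iff_of_prime hG hz,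
    mem_generatorsOf]
  split_ifs with hzH
  · simp only [Finset.mem_erase, mem_generatorsOf]
    exact ⟨fun ⟨⟨hne, _⟩, hu⟩ => ⟨hne, hu⟩,
      fun ⟨hne, hu⟩ => ⟨⟨hne, hzH ▸ hu ▸ mem_zpowers u⟩, hu⟩⟩
  · simp only [Finset.notMem_empty, iff_false, not_and]
    rintro ⟨-, hmem⟩ rfl
    have hu : u ≠ 1 := by
      rintro rfl
      exact hH zpowers_one_eq_bot
    exact hzH (zpowers_eq_of_mem_zpowers (hG z hz) hu hmem).symm

theorem neighborFinset_powerGraph_one_inter {H : Subgroup G} (hH : H ≠ ⊥) :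
    (powerGraph G).neighborFinset 1 ∩ generatorsOf H = generatorsOf H := by
  refine Finset.inter_eq_right.mpr fun u hu => ?_
  rw [mem_generatorsOf] at hu
  refine (SimpleGraph.mem_neighborFinset _ _ _).mpr (powerGraph_adj_one ?_)
  rintro rfl
  exact hH (hu ▸ zpowers_one_eq_bot)

theorem card_sub_card_cyclicSubgroupsOfOrder_le_eigMult
    (hG : ∀ x : G, x ≠ 1 → (orderOf x).Prime) (α : ℝ) (n : ℕ) :
    #({x | orderOf x = n} : Finset G) - #(cyclicSubgroupsOfOrder G n) ≤
      eigMult (Aalpha (powerGraph G) α) (α * n - 1) := by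
  have hcount := card_filter_cyclicGenerator_ne_add (G := G) n
  set I : Finset G := {x | orderOf x = n ∧ cyclicGenerator (zpowers x) ≠ x}
  have hI : Fintype.card I = #({x | orderOf x = n} : Finset G) - #(cyclicSubgroupsOfOrder G n) := by
    rw [Fintype.card_coe]
    omega
  rw [← hI]
  refine card_le_eigMult_of_linearIndependent _ _
    (f := fun x : I => indicatorSub {x.1} {cyclicGenerator (zpowers x.1)}) ?_ ?_
  · refine linearIndependent_indicatorSub _ _ (fun x : I => x.1)
      (fun x => Finset.mem_singleton_self _) (fun x y hyx h => hyx (Subtype.ext ?_))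
      (fun x y h => ?_)
    · exact (Finset.mem_singleton.mp h).symm
    · have hx := (Finset.mem_filter.mp x.2).2.2
      rw [Finset.mem_singleton] at h
      exact hx (by rw [h, cyclicGenerator_zpowers_cyclicGenerator])
  · rintro ⟨x, hx⟩
    simp only [I, Finset.mem_filter, Finset.mem_univ, true_and] at hx
    obtain ⟨hxn, hgen⟩ := hx
    have hzp := zpowers_cyclicGenerator x
    have hx1 : x ≠ 1 := by
      rintro rfl
      rw [zpowers_one_eq_bot, zpowers_eq_bot] at hzp
      exact hgen (by rwa [zpowers_one_eq_bot])
    rw [Aalpha_mulVec_indicatorSub_of_closedTwins _ _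
      (powerGraph_adj_of_zpowers_eq (Ne.symm hgen) hzp.symm)
      (fun z => powerGraph_adj_iff_of_zpowers_eq hzp.symm), degree_powerGraph_of_prime hG hx1, hxn]
    have hn : 1 ≤ n := hxn ▸ orderOf_pos x
    congr 1
    push_cast [hn]
    ring

theorem Aalpha_powerGraph_mulVec_indicatorSub_generatorsOf
    (hG : ∀ x : G, x ≠ 1 → (orderOf x).Prime) (α : ℝ) {n : ℕ} {H K : Subgroup G}
    (hH : H ∈ cyclicSubgroupsOfOrder G n) (hK : K ∈ cyclicSubgroupsOfOrder G n)
    (hHK : H ≠ K) :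
    Aalpha (powerGraph G) α *ᵥ indicatorSub (generatorsOf H) (generatorsOf K) =
      (α + n - 2) • indicatorSub (generatorsOf H) (generatorsOf K) := by
  have hn1 : n ≠ 1 := by
    rintro rfl
    obtain ⟨x, hx, rfl⟩ := mem_cyclicSubgroupsOfOrder.mp hH
    obtain ⟨y, hy, rfl⟩ := mem_cyclicSubgroupsOfOrder.mp hK
    rw [orderOf_eq_one_iff] at hx hy
    exact hHK (by rw [hx, hy])
  have hgen : ∀ L ∈ cyclicSubgroupsOfOrder G n,
      L ≠ ⊥ ∧ 2 ≤ n ∧ #(generatorsOf L) = n - 1 := by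
    intro L hL
    obtain ⟨x, hx, rfl⟩ := mem_cyclicSubgroupsOfOrder.mp hL
    have hx1 : x ≠ 1 := by
      rintro rfl
      exact hn1 (by rw [← hx, orderOf_one])
    exact ⟨by rwa [Ne, zpowers_eq_bot], hx ▸ (hG x hx1).two_le,
      by rw [card_generatorsOf_zpowers_of_prime (hG x hx1), hx]⟩
  have hclass : ∀ L ∈ cyclicSubgroupsOfOrder G n, ∀ L' ∈ cyclicSubgroupsOfOrder G n, L ≠ L' →
      ∀ z ∈ generatorsOf L, (powerGraph G).degree z = n - 1 ∧
        #((powerGraph G).neighborFinset z ∩ generatorsOf L) = n - 2 ∧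
        #((powerGraph G).neighborFinset z ∩ generatorsOf L') = 0 := by
    intro L hL L' hL' hne z hz
    rw [mem_generatorsOf] at hz
    have hz1 : z ≠ 1 := by
      rintro rfl
      exact (hgen L hL).1 (hz ▸ zpowers_one_eq_bot)
    obtain ⟨x, hx, rfl⟩ := mem_cyclicSubgroupsOfOrder.mp hL
    refine ⟨by rw [degree_powerGraph_of_prime hG hz1, orderOf_eq_of_zpowers_eq hz, hx], ?_, ?_⟩
    · rw [neighborFinset_powerGraph_inter_of_prime hG hz1 (hgen _ hL).1, if_pos hz,
        Finset.card_erase_of_mem (mem_generatorsOf.mpr hz), (hgen _ hL).2.2]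
      omega
    · rw [neighborFinset_powerGraph_inter_of_prime hG hz1 (hgen _ hL').1,
        if_neg fun h => hne (hz.symm.trans h), Finset.card_empty]
  obtain ⟨hHbot, hn2, hHcard⟩ := hgen H hH
  obtain ⟨hKbot, -, hKcard⟩ := hgen K hK
  rw [Aalpha_mulVec_indicatorSub _ _ (d := n - 1) (a := n - 2) (b := 0) ?_
    (hclass H hH K hK hHK) (hclass K hK H hH hHK.symm) ?_]
  · congr 1
    push_cast [Nat.cast_sub (by omega : 1 ≤ n), Nat.cast_sub hn2]
    ring
  · exact Finset.disjoint_left.mpr fun z hzH hzK =>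
      hHK ((mem_generatorsOf.mp hzH).symm.trans (mem_generatorsOf.mp hzK))
  · intro z hzH hzK
    by_cases hz1 : z = 1
    · rw [hz1, neighborFinset_powerGraph_one_inter hHbot,
        neighborFinset_powerGraph_one_inter hKbot, hHcard, hKcard]
    · rw [mem_generatorsOf] at hzH hzK
      rw [neighborFinset_powerGraph_inter_of_prime hG hz1 hHbot,
        neighborFinset_powerGraph_inter_of_prime hG hz1 hKbot, if_neg hzH, if_neg hzK]

theorem card_cyclicSubgroupsOfOrder_sub_one_le_eigMult
    (hG : ∀ x : G, x ≠ 1 → (orderOf x).Prime) (α : ℝ) (n : ℕ) :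
    #(cyclicSubgroupsOfOrder G n) - 1 ≤ eigMult (Aalpha (powerGraph G) α) (α + n - 2) := by
  rcases (cyclicSubgroupsOfOrder G n).eq_empty_or_nonempty with hT | ⟨H₀, hH₀⟩
  · simp [hT]
  rw [← Finset.card_erase_of_mem hH₀, ← Fintype.card_coe]
  have hgen : ∀ H : (cyclicSubgroupsOfOrder G n).erase H₀,
      cyclicGenerator H.1 ∈ generatorsOf H.1 := by
    rintro ⟨H, hH⟩
    obtain ⟨x, -, rfl⟩ := mem_cyclicSubgroupsOfOrder.mp (Finset.mem_of_mem_erase hH)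
    exact mem_generatorsOf.mpr (zpowers_cyclicGenerator x)
  refine card_le_eigMult_of_linearIndependent _ _
    (f := fun H : (cyclicSubgroupsOfOrder G n).erase H₀ =>
      indicatorSub (generatorsOf H.1) (generatorsOf H₀)) ?_ ?_
  · refine linearIndependent_indicatorSub _ _ (fun H => cyclicGenerator H.1) hgen
      (fun H K hKH h => hKH (Subtype.ext ?_)) (fun H _ h => Finset.ne_of_mem_erase H.2 ?_)
    · exact (mem_generatorsOf.mp h).symm.trans (mem_generatorsOf.mp (hgen H))
    · exact (mem_generatorsOf.mp (hgen H)).symm.trans (mem_generatorsOf.mp h)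
  · rintro ⟨H, hH⟩
    exact Aalpha_powerGraph_mulVec_indicatorSub_generatorsOf hG α (Finset.mem_of_mem_erase hH)
      hH₀ (Finset.ne_of_mem_erase hH)

end PrimeOrderElements

section OrderPQ

variable {G : Type*} [Group G] [Fintype G]

theorem zpowers_eq_of_orderOf_eq_of_card_lt_sq {q : ℕ} (hq : q.Prime) (hcard : Nat.card G < q ^ 2)
    {x y : G} (hx : orderOf x = q) (hy : orderOf y = q) : zpowers x = zpowers y := by
  by_contra hne
  have hbot : zpowers x ⊓ zpowers y = ⊥ := by
    refine eq_bot_iff.mpr fun z hz => mem_bot.mpr (by_contra fun hz1 => hne ?_)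
    exact (zpowers_eq_of_mem_zpowers (hx ▸ hq) hz1 (mem_inf.mp hz).1).symm.trans
      (zpowers_eq_of_mem_zpowers (hy ▸ hq) hz1 (mem_inf.mp hz).2)
  have hindex := index_inf_le (H := zpowers x) (K := zpowers y)
  rw [hbot, index_bot] at hindex
  have hix := card_mul_index (zpowers x)
  have hiy := card_mul_index (zpowers y)
  rw [Nat.card_zpowers, hx] at hix
  rw [Nat.card_zpowers, hy] at hiy
  have hpos : 0 < Nat.card G := Nat.card_pos
  nlinarith [Nat.mul_le_mul_left (q * q) hindex]

variable {p q : ℕ}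

theorem orderOf_eq_or_of_card_eq_mul (hp : p.Prime) (hq : q.Prime)
    (hcard : Fintype.card G = p * q) (hna : ∃ a b : G, a * b ≠ b * a) {x : G} (hx : x ≠ 1) :
    orderOf x = p ∨ orderOf x = q := by
  obtain ⟨a, b, ha, hb, hab⟩ := Nat.dvd_mul.mp (hcard ▸ orderOf_dvd_card (x := x))
  rcases hp.eq_one_or_self_of_dvd a ha with rfl | rfl <;>
    rcases hq.eq_one_or_self_of_dvd b hb with rfl | rfl
  · exact absurd (orderOf_eq_one_iff.mp (by rw [← hab, one_mul])) hx
  · exact Or.inr (by rw [← hab, one_mul])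
  · exact Or.inl (by rw [← hab, mul_one])
  · have : IsCyclic G :=
      isCyclic_of_orderOf_eq_card x (by rw [Nat.card_eq_fintype_card, hcard, hab])
    let : CommGroup G := IsCyclic.commGroup
    obtain ⟨a, b, hne⟩ := hna
    exact absurd (mul_comm a b) hne

theorem card_cyclicSubgroupsOfOrder_of_card_eq_mul_right (hq : q.Prime) (hpq : p < q)
    (hcard : Fintype.card G = p * q) : #(cyclicSubgroupsOfOrder G q) = 1 := by
  have : Fact q.Prime := ⟨hq⟩
  obtain ⟨x, hx⟩ := exists_prime_orderOf_dvd_card (G := G) q (hcard ▸ dvd_mul_left q p)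
  have hlt : Nat.card G < q ^ 2 := by
    rw [Nat.card_eq_fintype_card, hcard, sq]
    exact Nat.mul_lt_mul_of_pos_right hpq hq.pos
  refine Finset.card_eq_one.mpr ⟨zpowers x, Finset.eq_singleton_iff_unique_mem.mpr
    ⟨mem_cyclicSubgroupsOfOrder.mpr ⟨x, hx, rfl⟩, fun H hH => ?_⟩⟩
  obtain ⟨y, hy, rfl⟩ := mem_cyclicSubgroupsOfOrder.mp hH
  exact zpowers_eq_of_orderOf_eq_of_card_lt_sq hq hlt hy hx

theorem card_cyclicSubgroupsOfOrder_of_card_eq_mul_left (hp : p.Prime) (hq : q.Prime)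
    (hpq : p < q) (hcard : Fintype.card G = p * q) (hna : ∃ a b : G, a * b ≠ b * a) :
    #(cyclicSubgroupsOfOrder G p) = q := by
  have hS1 : #({x | orderOf x = 1} : Finset G) = 1 :=
    Finset.card_eq_one.mpr ⟨1, by ext; simp [orderOf_eq_one_iff]⟩
  have hSq := card_filter_orderOf_eq_of_prime (G := G) hq
  rw [card_cyclicSubgroupsOfOrder_of_card_eq_mul_right hq hpq hcard, mul_one] at hSq
  have hSp := card_filter_orderOf_eq_of_prime (G := G) hp
  have hpart : Fintype.card G = #({x | orderOf x = 1} : Finset G) +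
      (#({x | orderOf x = p} : Finset G) + #({x | orderOf x = q} : Finset G)) := by
    rw [← Finset.card_univ, Finset.card_eq_sum_card_fiberwise (f := orderOf) (t := {1, p, q}),
      Finset.sum_insert (by simp [hp.ne_one.symm, hq.ne_one.symm]),
      Finset.sum_pair hpq.ne]
    intro x _
    by_cases hx : x = 1
    · simp [hx]
    · rcases orderOf_eq_or_of_card_eq_mul hp hq hcard hna hx with h | h <;> simp [h]
  rw [hcard, hS1, hSp, hSq] at hpart
  obtain ⟨m, rfl⟩ : ∃ m, p = m + 1 := ⟨p - 1, (Nat.sub_add_cancel hp.one_le).symm⟩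
  have hq1 := hq.one_le
  have hm : 0 < m := by have := hp.two_le; omega
  simp only [Nat.add_sub_cancel] at hpart
  have : m * #(cyclicSubgroupsOfOrder G (m + 1)) = m * q := by
    zify [hq1] at hpart ⊢
    linarith
  exact Nat.eq_of_mul_eq_mul_left hm this

end OrderPQ

theorem stmt_17_general {α : ℝ}
    (p q : ℕ) (hp : p.Prime) (hq : q.Prime) (hpq : p < q)
    (G : Type) [Group G] [Fintype G] (hcard : Fintype.card G = p * q)
    (hna : ∃ a b : G, a * b ≠ b * a) :
    q * (p - 2) ≤ eigMult (Aalpha (powerGraph G) α) (α * (p : ℝ) - 1) ∧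
    q - 2 ≤ eigMult (Aalpha (powerGraph G) α) (α * (q : ℝ) - 1) ∧
    q - 1 ≤ eigMult (Aalpha (powerGraph G) α) (α + (p : ℝ) - 2) := by
  have hG : ∀ x : G, x ≠ 1 → (orderOf x).Prime := fun x hx =>
    (orderOf_eq_or_of_card_eq_mul hp hq hcard hna hx).elim (· ▸ hp) (· ▸ hq)
  have hTp := card_cyclicSubgroupsOfOrder_of_card_eq_mul_left hp hq hpq hcard hna
  have hTq := card_cyclicSubgroupsOfOrder_of_card_eq_mul_right hq hpq hcard
  have hSp := card_filter_orderOf_eq_of_prime (G := G) hp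
  have hSq := card_filter_orderOf_eq_of_prime (G := G) hq
  refine ⟨?_, ?_, ?_⟩
  · refine le_of_eq_of_le ?_ (card_sub_card_cyclicSubgroupsOfOrder_le_eigMult hG α p)
    rw [hSp, hTp, ← Nat.sub_one_mul, mul_comm]
    rfl
  · refine le_of_eq_of_le ?_ (card_sub_card_cyclicSubgroupsOfOrder_le_eigMult hG α q)
    rw [hSq, hTq]
    omega
  · exact hTp ▸ card_cyclicSubgroupsOfOrder_sub_one_le_eigMult hG α p

/-- eigenvalues of the power graph of a non-abelian group of order
`pq`, `p < q` primes. -/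
theorem stmt_17 {α : ℝ} (hα : α ∈ Set.Icc (0 : ℝ) 1)
    (p q : ℕ) (hp : p.Prime) (hq : q.Prime) (hpq : p < q)
    (G : Type) [Group G] [Fintype G] (hcard : Fintype.card G = p * q)
    (hna : ∃ a b : G, a * b ≠ b * a) :
    q * (p - 2) ≤ eigMult (Aalpha (powerGraph G) α) (α * (p : ℝ) - 1) ∧
    q - 2 ≤ eigMult (Aalpha (powerGraph G) α) (α * (q : ℝ) - 1) ∧
    q - 1 ≤ eigMult (Aalpha (powerGraph G) α) (α + (p : ℝ) - 2) :=
  stmt_17_general p q hp hq hpq G hcard hna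
end
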